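/- arXiv:1006.0411 — 2 statements merged into one kernel-verified Lean document; each statement's English description precedes it below -/
import Mathlib

section
/- Let n be a positive integer and let X_j be a sequence of nonempty compact connected subsets of ℝⁿ converging in the Hausdorff sense to a compact set X ⊆ ℝⁿ whose Hausdorff dimension is strictly greater than 1. Then H¹(X_j) → ∞ as j → ∞. -/
/-!
Suppose the lengths stay below `C` along a subsequence. In a continuum `K`, a maximal
`2ε`-separated subset has at most `(μH¹ K + ε) / ε` points: the `ε`-balls around its points are
disjoint, and each meets `K` in length at least `ε`, because the distance to the centre maps that
piece onto `[0, ε)`. Such a set is a `2ε`-cover of `K`, hence a `3ε`-cover of any set within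
Hausdorff distance `ε` of `K`. So for every small `r` the limit `L` is covered by at most
`(3C + 1) / r` balls of radius `r`, and covers of this size force `dimH L ≤ 1`.
-/

open MeasureTheory ENNReal
open Metric Set Filter Topology
open scoped NNReal

section PseudoEMetricSpace

variable {E : Type*} [PseudoEMetricSpace E]

theorem IsCompact.packingNumber_ne_top {K : Set E} (hK : IsCompact K) {ε : ℝ≥0} (hε : ε ≠ 0) :
    packingNumber ε K ≠ ⊤ := by
  obtain ⟨N, -, hNfin, hN⟩ :=
    exists_finite_isCover_of_isCompact (ε := ε / 2) (by simpa using hε) hK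
  refine ne_top_of_le_ne_top hNfin.encard_lt_top.ne ?_
  calc packingNumber ε K = packingNumber (2 * (ε / 2)) K := by rw [mul_div_cancel₀ _ two_ne_zero]
    _ ≤ externalCoveringNumber (ε / 2) K := packingNumber_two_mul_le_externalCoveringNumber _ _
    _ ≤ N.encard := hN.externalCoveringNumber_le_encard

theorem Metric.IsCover.of_hausdorffEDist_lt {A B N : Set E} {ε δ : ℝ≥0} (hN : IsCover ε A N)
    (hAB : hausdorffEDist A B < δ) : IsCover (ε + δ) B N := by
  intro b hb
  obtain ⟨a, ha, hba⟩ :=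
    exists_edist_lt_of_hausdorffEDist_lt hb (by rwa [hausdorffEDist_comm] at hAB)
  obtain ⟨x, hx, hax⟩ := hN ha
  refine ⟨x, hx, ?_⟩
  calc edist b x ≤ edist a x + edist b a := by rw [add_comm]; exact edist_triangle b a x
    _ ≤ ε + δ := add_le_add hax hba.le

theorem Metric.externalCoveringNumber_add_le_of_hausdorffEDist_lt {A B : Set E} {ε δ : ℝ≥0}
    (hAB : hausdorffEDist A B < δ) :
    externalCoveringNumber (ε + δ) B ≤ externalCoveringNumber ε A :=
  le_iInf₂ fun _ hN => (hN.of_hausdorffEDist_lt hAB).externalCoveringNumber_le_encard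

theorem Metric.exists_finset_isCover_card_le_externalCoveringNumber {A : Set E} {ε : ℝ≥0}
    (h : externalCoveringNumber ε A ≠ ⊤) :
    ∃ N : Finset E, IsCover ε A N ∧ (N.card : ℕ∞) ≤ externalCoveringNumber ε A := by
  obtain ⟨N, hN, hcard⟩ : ∃ N, IsCover ε A N ∧ N.encard < externalCoveringNumber ε A + 1 := by
    simpa [externalCoveringNumber, iInf_lt_iff] using (ENat.lt_add_one_iff h).2 le_rfl
  rw [ENat.lt_add_one_iff h] at hcard
  have hfin : N.Finite := encard_ne_top_iff.1 (ne_top_of_le_ne_top h hcard)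
  exact ⟨hfin.toFinset, by rwa [hfin.coe_toFinset],
    by rwa [← encard_coe_eq_coe_finsetCard, hfin.coe_toFinset]⟩

theorem Finset.sum_ediam_closedEBall_rpow_le (N : Finset E) {r : ℝ≥0} (hr : r ≤ 1) {s d : ℝ≥0}
    (hsd : s ≤ d) :
    ∑ x ∈ N, ediam (closedEBall x r) ^ (d : ℝ) ≤ 2 ^ (d : ℝ) * (N.card * (r : ℝ≥0∞) ^ (s : ℝ)) :=
  calc ∑ x ∈ N, ediam (closedEBall x r) ^ (d : ℝ)
      ≤ ∑ _x ∈ N, (2 * (r : ℝ≥0∞)) ^ (d : ℝ) :=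
        Finset.sum_le_sum fun _ _ => by gcongr; exact ediam_closedEBall_le
    _ = 2 ^ (d : ℝ) * (N.card * (r : ℝ≥0∞) ^ (d : ℝ)) := by
        rw [Finset.sum_const, nsmul_eq_mul, mul_rpow_of_nonneg _ _ d.coe_nonneg]
        ring
    _ ≤ 2 ^ (d : ℝ) * (N.card * (r : ℝ≥0∞) ^ (s : ℝ)) := by
        gcongr 2 ^ (d : ℝ) * (_ * ?_)
        exact rpow_le_rpow_of_exponent_ge (by exact_mod_cast hr) (by exact_mod_cast hsd)

end PseudoEMetricSpace

section MetricSpace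

variable {E : Type*} [MetricSpace E] [MeasurableSpace E] [BorelSpace E] {K : Set E}

theorem IsPreconnected.coe_le_hausdorffMeasure_inter_ball (hK : IsPreconnected K) {x y : E}
    (hx : x ∈ K) (hy : y ∈ K) {r : ℝ≥0} (hr : r ≤ dist y x) :
    (r : ℝ≥0∞) ≤ μH[1] (K ∩ ball x r) := by
  set f : E → ℝ := fun z => dist z x
  have hf : LipschitzWith 1 f := LipschitzWith.dist_left x
  have hIcc : Icc 0 (dist y x) ⊆ f '' K :=
    (hK.image f hf.continuous.continuousOn).Icc_subset ⟨x, hx, dist_self x⟩ ⟨y, hy, rfl⟩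
  have hIco : Ico 0 (r : ℝ) ⊆ f '' (K ∩ ball x r) := by
    rintro t ⟨ht0, htr⟩
    obtain ⟨z, hz, rfl⟩ := hIcc ⟨ht0, htr.le.trans hr⟩
    exact ⟨z, ⟨hz, htr⟩, rfl⟩
  calc (r : ℝ≥0∞) = μH[1] (Ico (0 : ℝ) r) := by
        rw [hausdorffMeasure_real, Real.volume_Ico, sub_zero, ofReal_coe_nnreal]
    _ ≤ μH[1] (f '' (K ∩ ball x r)) := measure_mono hIco
    _ ≤ μH[1] (K ∩ ball x r) := by
        simpa using hf.hausdorffMeasure_image_le zero_le_one (K ∩ ball x r)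

theorem IsPreconnected.card_mul_le_hausdorffMeasure_add (hK : IsPreconnected K) {s : Finset E}
    (hsK : ↑s ⊆ K) {r : ℝ≥0} (hs : IsSeparated (2 * r) (s : Set E)) :
    (s.card : ℝ≥0∞) * r ≤ μH[1] K + r := by
  rcases Nat.lt_or_ge s.card 2 with hs1 | hs2
  · calc (s.card : ℝ≥0∞) * r ≤ 1 * r := by gcongr; exact_mod_cast Nat.le_of_lt_succ hs1
      _ ≤ μH[1] K + r := by rw [one_mul]; exact le_add_self
  have hsep : ∀ x ∈ s, ∀ y ∈ s, x ≠ y → 2 * (r : ℝ) < dist x y := by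
    intro x hx y hy hxy
    have : 2 * (r : ℝ≥0∞) < edist x y := hs hx hy hxy
    rw [edist_nndist, ← ENNReal.coe_ofNat, ← ENNReal.coe_mul, ENNReal.coe_lt_coe] at this
    exact_mod_cast this
  have hball (x) (hx : x ∈ s) : (r : ℝ≥0∞) ≤ μH[1] (K ∩ ball x r) := by
    obtain ⟨y, hy, hyx⟩ := s.exists_mem_ne hs2 x
    exact hK.coe_le_hausdorffMeasure_inter_ball (hsK hx) (hsK hy)
      (by linarith [hsep y hy x hx hyx, r.coe_nonneg])
  have hdisj : (s : Set E).PairwiseDisjoint fun x => ball x r := fun x hx y hy hxy =>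
    ball_disjoint_ball (by linarith [hsep x hx y hy hxy])
  calc (s.card : ℝ≥0∞) * r = ∑ _x ∈ s, (r : ℝ≥0∞) := by rw [Finset.sum_const, nsmul_eq_mul]
    _ ≤ ∑ x ∈ s, μH[1] (K ∩ ball x r) := Finset.sum_le_sum hball
    _ = ∑ x ∈ s, μH[1].restrict K (ball x r) := by
        simp only [Measure.restrict_apply measurableSet_ball, inter_comm]
    _ = μH[1].restrict K (⋃ x ∈ s, ball x r) :=
        (measure_biUnion_finset hdisj fun _ _ => measurableSet_ball).symm
    _ ≤ μH[1] K := by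
        simpa using measure_mono (μ := μH[1].restrict K) (subset_univ (⋃ x ∈ s, ball x r))
    _ ≤ μH[1] K + r := le_self_add

theorem IsCompact.externalCoveringNumber_mul_le_hausdorffMeasure_add (hKc : IsCompact K)
    (hK : IsPreconnected K) {r : ℝ≥0} (hr : r ≠ 0) :
    (externalCoveringNumber (2 * r) K : ℝ≥0∞) * r ≤ μH[1] K + r := by
  have hfin := hKc.packingNumber_ne_top (mul_ne_zero two_ne_zero hr)
  have hS : (maximalSeparatedSet (2 * r) K).Finite := by
    rw [← Set.encard_ne_top_iff, encard_maximalSeparatedSet hfin]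
    exact hfin
  calc (externalCoveringNumber (2 * r) K : ℝ≥0∞) * r ≤ (hS.toFinset.card : ℝ≥0∞) * r := by
        gcongr
        rw [← ENat.toENNReal_coe, ENat.toENNReal_le, ← Set.encard_coe_eq_coe_finsetCard,
          hS.coe_toFinset]
        exact (isCover_maximalSeparatedSet hfin).externalCoveringNumber_le_encard
    _ ≤ μH[1] K + r := hK.card_mul_le_hausdorffMeasure_add
        (by rw [hS.coe_toFinset]; exact maximalSeparatedSet_subset)
        (by rw [hS.coe_toFinset]; exact_mod_cast isSeparated_maximalSeparatedSet)

theorem IsCompact.externalCoveringNumber_mul_le_of_hausdorffEDist_lt (hKc : IsCompact K)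
    (hK : IsPreconnected K) {L : Set E} {r : ℝ≥0} (hr : r ≠ 0)
    (hKL : hausdorffEDist K L < (r / 3 : ℝ≥0)) :
    (externalCoveringNumber r L : ℝ≥0∞) * r ≤ 3 * μH[1] K + r := by
  have hr3 : (3 : ℝ≥0∞) * (r / 3 : ℝ≥0) = r := by
    exact_mod_cast mul_div_cancel₀ r three_ne_zero
  calc (externalCoveringNumber r L : ℝ≥0∞) * r
      = externalCoveringNumber (2 * (r / 3) + r / 3) L * (3 * (r / 3 : ℝ≥0)) := by
        rw [show 2 * (r / 3) + r / 3 = r by ring, hr3]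
    _ ≤ 3 * ((externalCoveringNumber (2 * (r / 3)) K : ℝ≥0∞) * (r / 3 : ℝ≥0)) := by
        rw [mul_left_comm]
        gcongr
        exact externalCoveringNumber_add_le_of_hausdorffEDist_lt hKL
    _ ≤ 3 * (μH[1] K + (r / 3 : ℝ≥0)) := by
        gcongr
        exact hKc.externalCoveringNumber_mul_le_hausdorffMeasure_add hK (by simpa using hr)
    _ = 3 * μH[1] K + r := by rw [mul_add, hr3]

end MetricSpace

section EMetricSpace

variable {E : Type*} [EMetricSpace E] {A : Set E} {s : ℝ≥0} {C : ℝ≥0∞}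

theorem hausdorffMeasure_le_of_frequently_externalCoveringNumber_mul_rpow_le
    [MeasurableSpace E] [BorelSpace E] {d : ℝ≥0} (hsd : s ≤ d)
    (h : ∃ᶠ r in 𝓝[>] (0 : ℝ≥0), (externalCoveringNumber r A : ℝ≥0∞) * r ^ (s : ℝ) ≤ C) :
    μH[d] A ≤ 2 ^ (d : ℝ) * C := by
  rcases eq_or_ne C ⊤ with rfl | hC
  · simp [mul_top (rpow_pos two_pos ofNat_ne_top).ne']
  set S := {r : ℝ≥0 | 0 < r ∧ r ≤ 1 ∧ (externalCoveringNumber r A : ℝ≥0∞) * r ^ (s : ℝ) ≤ C}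
  have hS : ∃ᶠ r in 𝓝[>] (0 : ℝ≥0), r ∈ S :=
    (h.and_eventually (Ioc_mem_nhdsGT zero_lt_one)).mono fun r ⟨hr, h0, h1⟩ => ⟨h0, h1, hr⟩
  have hcover (r : ℝ≥0) :
      ∃ N : Finset E, r ∈ S → IsCover r A N ∧ (N.card : ℝ≥0∞) * r ^ (s : ℝ) ≤ C := by
    by_cases hr : r ∈ S
    · obtain ⟨h0, -, hle⟩ := hr
      have hfin : externalCoveringNumber r A ≠ ⊤ := by
        intro htop
        refine hC (top_unique (hle.trans' ?_))
        rw [htop, ENat.toENNReal_top, top_mul (rpow_pos (by exact_mod_cast h0) coe_ne_top).ne']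
      obtain ⟨N, hN, hcard⟩ := exists_finset_isCover_card_le_externalCoveringNumber hfin
      refine ⟨N, fun _ => ⟨hN, hle.trans' ?_⟩⟩
      gcongr
      exact_mod_cast hcard
    · exact ⟨∅, fun h => absurd h hr⟩
  choose N hN using hcover
  have : (𝓝[>] (0 : ℝ≥0) ⊓ 𝓟 S).NeBot := frequently_iff_neBot.1 hS
  have hSl : ∀ᶠ r in 𝓝[>] (0 : ℝ≥0) ⊓ 𝓟 S, r ∈ S := mem_inf_of_right (mem_principal_self S)
  have hr0 : Tendsto (fun r : ℝ≥0 => 2 * (r : ℝ≥0∞)) (𝓝[>] 0 ⊓ 𝓟 S) (𝓝 0) := by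
    have : Tendsto (fun r : ℝ≥0 => (r : ℝ≥0∞)) (𝓝[>] 0 ⊓ 𝓟 S) (𝓝 0) :=
      (ENNReal.tendsto_coe.2 tendsto_id).mono_left (inf_le_left.trans nhdsWithin_le_nhds)
    simpa using ENNReal.Tendsto.const_mul this (.inr ofNat_ne_top)
  refine (Measure.hausdorffMeasure_le_liminf_sum d A (fun r : ℝ≥0 => 2 * (r : ℝ≥0∞)) hr0
    (fun r (x : N r) => closedEBall (x : E) r) (.of_forall fun _ _ => ediam_closedEBall_le)
    (hSl.mono fun r hr =>
      (isCover_iff_subset_iUnion_closedEBall.1 (hN r hr).1).trans_eq (biUnion_eq_iUnion _ _))).trans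
    (liminf_le_of_frequently_le' (hSl.mono fun r hr => ?_).frequently)
  rw [Finset.sum_coe_sort (N r) fun x => ediam (closedEBall x r) ^ (d : ℝ)]
  exact ((N r).sum_ediam_closedEBall_rpow_le hr.2.1 hsd).trans (by gcongr; exact (hN r hr).2)

theorem dimH_le_of_frequently_externalCoveringNumber_mul_rpow_le (hC : C ≠ ⊤)
    (h : ∃ᶠ r in 𝓝[>] (0 : ℝ≥0), (externalCoveringNumber r A : ℝ≥0∞) * r ^ (s : ℝ) ≤ C) :
    dimH A ≤ s := by
  borelize E
  refine dimH_le fun d hd => le_of_not_gt fun hsd => ?_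
  have hμ := hausdorffMeasure_le_of_frequently_externalCoveringNumber_mul_rpow_le
    (by exact_mod_cast hsd.le) h
  exact (hμ.trans_lt (mul_lt_top (rpow_lt_top_of_nonneg d.coe_nonneg ofNat_ne_top) hC.lt_top)).ne hd

end EMetricSpace

theorem length_tendsto_top_of_dimH_limit_gt_one_general
    (n : ℕ)
    (X : ℕ → Set (EuclideanSpace ℝ (Fin n))) (L : Set (EuclideanSpace ℝ (Fin n)))
    (hne : ∀ j, (X j).Nonempty) (hcpt : ∀ j, IsCompact (X j))
    (hconn : ∀ j, IsConnected (X j))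
    (hLcpt : IsCompact L) (hdim : 1 < dimH L)
    (hlim : Filter.Tendsto (fun j => Metric.hausdorffDist (X j) L)
      Filter.atTop (nhds 0)) :
    Filter.Tendsto (fun j => μH[1] (X j)) Filter.atTop (nhds ⊤) := by
  have hLne : L.Nonempty := L.eq_empty_or_nonempty.resolve_left (by rintro rfl; simp at hdim)
  have hedist : Tendsto (fun j => hausdorffEDist (X j) L) atTop (𝓝 0) := by
    have hfin (j : ℕ) : hausdorffEDist (X j) L ≠ ⊤ := hausdorffEDist_ne_top_of_nonempty_of_bounded
      (hne j) hLne (hcpt j).isBounded hLcpt.isBounded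
    simpa [hausdorffDist, ofReal_toReal (hfin _)] using ENNReal.tendsto_ofReal hlim
  refine ENNReal.tendsto_nhds_top_iff_nnreal.2 fun C => ?_
  by_contra hC
  simp only [not_eventually, not_lt] at hC
  have hcov : ∀ᶠ r in 𝓝[>] (0 : ℝ≥0),
      (externalCoveringNumber r L : ℝ≥0∞) * r ^ ((1 : ℝ≥0) : ℝ) ≤ 3 * C + 1 := by
    filter_upwards [Ioc_mem_nhdsGT zero_lt_one] with r ⟨hr0, hr1⟩
    obtain ⟨j, hjC, hjL⟩ := (hC.and_eventually (hedist.eventually (gt_mem_nhds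
      (show (0 : ℝ≥0∞) < (r / 3 : ℝ≥0) by simpa using hr0.ne')))).exists
    calc (externalCoveringNumber r L : ℝ≥0∞) * r ^ ((1 : ℝ≥0) : ℝ)
        = externalCoveringNumber r L * r := by rw [NNReal.coe_one, ENNReal.rpow_one]
      _ ≤ 3 * μH[1] (X j) + r :=
        (hcpt j).externalCoveringNumber_mul_le_of_hausdorffEDist_lt (hconn j).isPreconnected
          hr0.ne' hjL
      _ ≤ 3 * C + 1 := by gcongr; exact_mod_cast hr1
  have hdimL := dimH_le_of_frequently_externalCoveringNumber_mul_rpow_le (by finiteness)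
    hcov.frequently
  exact hdim.not_ge (by simpa using hdimL)

/-- If nonempty compact connected subsets of `ℝⁿ` converge in the Hausdorff sense to a
compact set of Hausdorff dimension strictly greater than `1`, then their lengths
(one-dimensional Hausdorff measures) diverge to infinity. -/
theorem length_tendsto_top_of_dimH_limit_gt_one
    (n : ℕ) (hn : 0 < n)
    (X : ℕ → Set (EuclideanSpace ℝ (Fin n))) (L : Set (EuclideanSpace ℝ (Fin n)))
    (hne : ∀ j, (X j).Nonempty) (hcpt : ∀ j, IsCompact (X j))
    (hconn : ∀ j, IsConnected (X j))
    (hLcpt : IsCompact L) (hdim : 1 < dimH L)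
    (hlim : Filter.Tendsto (fun j => Metric.hausdorffDist (X j) L)
      Filter.atTop (nhds 0)) :
    Filter.Tendsto (fun j => μH[1] (X j)) Filter.atTop (nhds ⊤) :=
  length_tendsto_top_of_dimH_limit_gt_one_general n X L hne hcpt hconn hLcpt hdim hlim
end

section
/- (Gromov's compactness theorem) Let D > 0 and let N : (0,∞) → ℕ. Suppose M_j is a sequence of nonempty compact metric spaces such that diam(M_j) ≤ D for all j, and for every r > 0 and every j, any subset S ⊆ M_j whose points have pairwise distances ≥ r (equivalently, any collection of disjoint open balls of radius r/2) has at most N(r) elements. Then a subsequence of the M_j converges in the Gromov-Hausdorff distance to a nonempty compact metric space Y. -/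
open GromovHausdorff Metric Filter Set

/-- A maximal `r`-separated set of cardinality `≤ N` covers with balls of radius `r`. -/
lemma cover_of_pack {α : Type*} [MetricSpace α] [Nonempty α] {r : ℝ} (hr : 0 < r) (N : ℕ)
    (hpack : ∀ S : Finset α, (∀ x ∈ S, ∀ y ∈ S, x ≠ y → r ≤ dist x y) → S.card ≤ N) :
    ∃ s : Finset α, s.card ≤ N ∧ (univ : Set α) ⊆ ⋃ x ∈ s, ball x r := by
  classical
  set P : Set ℕ := {n | ∃ S : Finset α, (∀ x ∈ S, ∀ y ∈ S, x ≠ y → r ≤ dist x y) ∧ S.card = n}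
  have h0 : 0 ∈ P := ⟨∅, by simp⟩
  have hbdd : BddAbove P := ⟨N, fun n ⟨S, hS, hc⟩ => hc ▸ hpack S hS⟩
  obtain ⟨S, hS, hcard⟩ : sSup P ∈ P := Nat.sSup_mem ⟨0, h0⟩ hbdd
  refine ⟨S, hcard ▸ hpack S hS, fun y _ => ?_⟩
  by_contra hy
  simp only [mem_iUnion, mem_ball, not_exists, not_lt] at hy
  have hySep : ∀ x ∈ S, r ≤ dist y x := fun x hx => hy x hx
  have hyS : y ∉ S := fun h => absurd (hySep y h) (by simp [hr.not_ge])
  have : S.card + 1 ∈ P := by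
    refine ⟨insert y S, ?_, Finset.card_insert_of_notMem hyS⟩
    intro a ha b hb hab
    rcases Finset.mem_insert.1 ha with ha | ha <;>
      rcases Finset.mem_insert.1 hb with hb | hb
    · exact absurd (ha.trans hb.symm) hab
    · exact ha ▸ hySep b hb
    · exact dist_comm a b ▸ (hb ▸ hySep a ha)
    · exact hS a ha b hb hab
  have := le_csSup hbdd this
  omega

/-- **Gromov's compactness theorem.** A sequence of nonempty compact metric spaces with
uniformly bounded diameter, and a uniform bound `N r` on the number of points with
pairwise distances `≥ r` (i.e. on the number of disjoint balls of radius `r/2`), has a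
subsequence converging in the Gromov-Hausdorff distance to a nonempty compact metric
space (here realized as the representative `Y.Rep` of a point `Y` of Gromov-Hausdorff
space). -/
theorem gromov_compactness
    (X : ℕ → Type*) [∀ j, MetricSpace (X j)] [∀ j, CompactSpace (X j)]
    [∀ j, Nonempty (X j)]
    (D : ℝ) (hD : 0 < D) (N : ℝ → ℕ)
    (hdiam : ∀ j, Metric.diam (Set.univ : Set (X j)) ≤ D)
    (hpack : ∀ r : ℝ, 0 < r → ∀ j, ∀ S : Finset (X j),
      (∀ x ∈ S, ∀ y ∈ S, x ≠ y → r ≤ dist x y) → S.card ≤ N r) :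
    ∃ φ : ℕ → ℕ, StrictMono φ ∧
      ∃ Y : GromovHausdorff.GHSpace,
        Filter.Tendsto (fun j => GromovHausdorff.ghDist (X (φ j)) Y.Rep)
          Filter.atTop (nhds 0) := by
  classical
  set t : Set GHSpace := Set.range fun j => toGHSpace (X j) with ht
  -- transfer hypotheses to representatives
  have key : ∀ p ∈ t, Metric.diam (univ : Set p.Rep) ≤ D ∧
      ∀ r : ℝ, 0 < r → ∀ S : Finset p.Rep,
        (∀ x ∈ S, ∀ y ∈ S, x ≠ y → r ≤ dist x y) → S.card ≤ N r := by
    rintro p ⟨j, rfl⟩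
    obtain ⟨e⟩ : Nonempty (X j ≃ᵢ (toGHSpace (X j)).Rep) := by
      rw [← toGHSpace_eq_toGHSpace_iff_isometryEquiv, GHSpace.toGHSpace_rep]
    constructor
    · rw [← e.diam_univ]; exact hdiam j
    · intro r hr S hS
      have : (S.image e.symm).card ≤ N r := by
        apply hpack r hr j
        intro x hx y hy hxy
        simp only [Finset.mem_image] at hx hy
        obtain ⟨a, ha, rfl⟩ := hx
        obtain ⟨b, hb, rfl⟩ := hy
        rw [IsometryEquiv.dist_eq]
        exact hS a ha b hb (fun h => hxy (by rw [h]))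
      rwa [Finset.card_image_of_injective _ e.symm.injective] at this
  have htb : TotallyBounded t := by
    apply GromovHausdorff.totallyBounded (C := D) (u := fun n => 1 / (n + 1))
      (K := fun n => N (1 / (n + 1)))
      tendsto_one_div_add_atTop_nhds_zero_nat
      (fun p hp => (key p hp).1)
    intro p hp n
    have hr : (0 : ℝ) < 1 / (n + 1) := by positivity
    obtain ⟨s, hcard, hcov⟩ := cover_of_pack hr (N (1 / (n + 1))) ((key p hp).2 _ hr)
    refine ⟨(s : Set p.Rep), ?_, by simpa using hcov⟩
    exact (Cardinal.mk_coe_finset (s := s)).trans_le (Nat.cast_le.2 hcard)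
  have hcl : IsCompact (closure t) :=
    TotallyBounded.isCompact_of_isClosed htb.closure isClosed_closure
  obtain ⟨Y, _, φ, hφ, hconv⟩ :=
    hcl.tendsto_subseq (x := fun j => toGHSpace (X j)) fun j => subset_closure ⟨j, rfl⟩
  refine ⟨φ, hφ, Y, ?_⟩
  have : Tendsto (fun j => dist (toGHSpace (X (φ j))) Y) atTop (nhds 0) :=
    (tendsto_iff_dist_tendsto_zero).1 hconv
  convert this using 2 with j
  rw [ghDist, GHSpace.toGHSpace_rep]
end
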